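/- arXiv:1810.12429 — 8 statements merged into one kernel-verified Lean document; each statement's English description precedes it below -/
import Mathlib

section
/- (Discounted density-ratio characterization) Let γ ∈ (0,1), let d_π and d_{π₀} be the discounted visitation distributions under target and behavior policies with d_{π₀}(s) > 0 for all s, and define L(w,f) = γ E_{(s,a,s')∼d_{π₀}}[(w(s)·β(a|s) − w(s'))·f(s')] + (1-γ)·E_{s∼d₀}[(1 − w(s))·f(s)], where β(a|s) = π(a|s)/π₀(a|s) and (s,a,s')∼d_{π₀} means s∼d_{π₀}, a∼π₀(·|s), s'∼T(·|s,a). Then w(s) = d_π(s)/d_{π₀}(s) for all s if and only if L(w,f) = 0 for every function f. -/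
/-!
Write `P_π(s, s') = ∑ₐ π(a|s) T(s'|s,a)` and let
`R_π(d)(s') = γ ∑ₛ P_π(s, s') d(s) - d(s') + (1 - γ) d₀(s')` be the residual of the
discounted flow equation, so that `d_π` is the unique zero of `R_π`. Since `π₀ β = π`
(`π₀ = 0` forces `π = 0`, so the junk value `π / 0 = 0` is harmless) and `R_{π₀}(d_{π₀}) = 0`,
exchanging the order of summation gives `L(w, f) = ∑_{s'} R_π(w d_{π₀})(s') f(s')`.
Hence `L(w, ·) ≡ 0` iff `R_π(w d_{π₀}) = 0`, iff `w d_{π₀} = d_π`, iff `w = d_π / d_{π₀}`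
because `d_{π₀} > 0`.
-/

open Finset Matrix

namespace DiscountedMDP

variable {S A : Type*} [Fintype S] [Fintype A]

def stateKernel (T : S → A → S → ℝ) (π : S → A → ℝ) (s s' : S) : ℝ :=
  ∑ a, π s a * T s a s'

def flowResidual (P : S → S → ℝ) (d0 : S → ℝ) (γ : ℝ) (d : S → ℝ) (s' : S) : ℝ :=
  γ * (∑ s, P s s' * d s) - d s' + (1 - γ) * d0 s'

noncomputable def densityRatioLoss (T : S → A → S → ℝ) (π π0 : S → A → ℝ) (d0 : S → ℝ) (γ : ℝ)
    (dπ0 w f : S → ℝ) : ℝ :=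
  γ * (∑ s, ∑ a, ∑ s', dπ0 s * π0 s a * T s a s' * ((w s * (π s a / π0 s a) - w s') * f s'))
    + (1 - γ) * (∑ s, d0 s * ((1 - w s) * f s))

theorem sum_stateKernel_mul (T : S → A → S → ℝ) (π : S → A → ℝ) (g : S → S → ℝ) :
    ∑ s', ∑ s, stateKernel T π s s' * g s s' = ∑ s, ∑ a, ∑ s', π s a * T s a s' * g s s' := by
  simp only [stateKernel, sum_mul]
  rw [sum_comm]
  exact sum_congr rfl fun _ _ => sum_comm

theorem densityRatioLoss_eq_dotProduct {T : S → A → S → ℝ} {π π0 : S → A → ℝ} {d0 : S → ℝ}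
    {γ : ℝ} {dπ0 : S → ℝ} (hdπ0 : ∀ s', flowResidual (stateKernel T π0) d0 γ dπ0 s' = 0)
    (hβ : ∀ s a, π0 s a * (π s a / π0 s a) = π s a) (w f : S → ℝ) :
    densityRatioLoss T π π0 d0 γ dπ0 w f
      = flowResidual (stateKernel T π) d0 γ (fun s => w s * dπ0 s) ⬝ᵥ f := by
  have hterm : ∀ s a s', dπ0 s * π0 s a * T s a s' * ((w s * (π s a / π0 s a) - w s') * f s')
      = π s a * T s a s' * (w s * dπ0 s * f s') - π0 s a * T s a s' * (dπ0 s * (w s' * f s')) :=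
    fun s a s' => by linear_combination dπ0 s * T s a s' * w s * f s' * hβ s a
  have hflow :
      ∑ s, ∑ a, ∑ s', dπ0 s * π0 s a * T s a s' * ((w s * (π s a / π0 s a) - w s') * f s') =
        ∑ s', ((∑ s, stateKernel T π s s' * (w s * dπ0 s)) * f s'
          - (∑ s, stateKernel T π0 s s' * dπ0 s) * (w s' * f s')) := by
    calc _ = ∑ s, ∑ a, ∑ s', (π s a * T s a s' * (w s * dπ0 s * f s')
            - π0 s a * T s a s' * (dπ0 s * (w s' * f s'))) := by simp only [hterm]
      _ = ∑ s', ∑ s, stateKernel T π s s' * (w s * dπ0 s * f s')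
            - ∑ s', ∑ s, stateKernel T π0 s s' * (dπ0 s * (w s' * f s')) := by
          simp only [sum_sub_distrib, sum_stateKernel_mul]
      _ = _ := by simp only [← sum_sub_distrib, sum_mul, mul_assoc]
  rw [densityRatioLoss, hflow, mul_sum, mul_sum, ← sum_add_distrib]
  refine sum_congr rfl fun s' _ => ?_
  unfold flowResidual at hdπ0 ⊢
  linear_combination (-(w s' * f s')) * hdπ0 s'

theorem flowResidual_eq_zero_iff {P : S → S → ℝ} {d0 : S → ℝ} {γ : ℝ} {dπ : S → ℝ}
    (hfix : ∀ s', flowResidual P d0 γ dπ s' = 0)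
    (hunique : ∀ d, (∀ s', flowResidual P d0 γ d s' = 0) → d = dπ) (d : S → ℝ) :
    flowResidual P d0 γ d = 0 ↔ d = dπ :=
  ⟨fun h => hunique d (congrFun h), fun h => h ▸ funext hfix⟩

end DiscountedMDP

open DiscountedMDP

theorem stmt_4_general {S A : Type*} [Fintype S] [Fintype A]
    (T : S → A → S → ℝ)
    (π π0 : S → A → ℝ)
    (hπ_nonneg : ∀ s a, 0 ≤ π s a)
    (habs : ∀ s a, 0 < π s a → 0 < π0 s a)
    (d0 : S → ℝ)
    (γ : ℝ)
    (dπ dπ0 : S → ℝ)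
    -- `dπ` is the unique solution of its discounted fixed-point equation:
    (hdπ_fix : ∀ s', γ * (∑ s, (∑ a, π s a * T s a s') * dπ s) - dπ s'
        + (1 - γ) * d0 s' = 0)
    (hdπ_unique : ∀ d : S → ℝ,
      (∀ s', γ * (∑ s, (∑ a, π s a * T s a s') * d s) - d s'
        + (1 - γ) * d0 s' = 0) → d = dπ)
    -- `dπ0` solves the analogous equation for the behavior policy and is positive:
    (hdπ0_fix : ∀ s', γ * (∑ s, (∑ a, π0 s a * T s a s') * dπ0 s) - dπ0 s'
        + (1 - γ) * d0 s' = 0)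
    (hdπ0_pos : ∀ s, 0 < dπ0 s)
    (w : S → ℝ) :
    (∀ s, w s = dπ s / dπ0 s) ↔
      (∀ f : S → ℝ,
        γ * (∑ s, ∑ a, ∑ s', dπ0 s * π0 s a * T s a s' *
              ((w s * (π s a / π0 s a) - w s') * f s'))
          + (1 - γ) * (∑ s, d0 s * ((1 - w s) * f s)) = 0) := by
  have hβ : ∀ s a, π0 s a * (π s a / π0 s a) = π s a := fun s a =>
    mul_div_cancel_of_imp' fun h0 =>
      (hπ_nonneg s a).eq_or_lt.elim Eq.symm fun hpos => absurd h0 (habs s a hpos).ne'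
  change _ ↔ ∀ f, densityRatioLoss T π π0 d0 γ dπ0 w f = 0
  simp only [densityRatioLoss_eq_dotProduct hdπ0_fix hβ]
  rw [dotProduct_eq_zero_iff,
    flowResidual_eq_zero_iff (P := stateKernel T π) hdπ_fix hdπ_unique, funext_iff]
  exact forall_congr' fun s => eq_div_iff_mul_eq (hdπ0_pos s).ne'

/-- Discounted density-ratio characterization: `w = dπ/dπ0` iff the
loss `L(w,f)` vanishes for every discriminator `f`. -/
theorem stmt_4 {S A : Type*} [Fintype S] [Fintype A]
    (T : S → A → S → ℝ)
    (hTnonneg : ∀ s a s', 0 ≤ T s a s')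
    (hTstoch : ∀ s a, ∑ s', T s a s' = 1)
    (π π0 : S → A → ℝ)
    (hπ_nonneg : ∀ s a, 0 ≤ π s a) (hπ_stoch : ∀ s, ∑ a, π s a = 1)
    (hπ0_nonneg : ∀ s a, 0 ≤ π0 s a) (hπ0_stoch : ∀ s, ∑ a, π0 s a = 1)
    (habs : ∀ s a, 0 < π s a → 0 < π0 s a)
    (d0 : S → ℝ) (hd0_nonneg : ∀ s, 0 ≤ d0 s) (hd0_sum : ∑ s, d0 s = 1)
    (γ : ℝ) (hγ : γ ∈ Set.Ioo (0 : ℝ) 1)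
    (dπ dπ0 : S → ℝ)
    -- `dπ` is the unique solution of its discounted fixed-point equation:
    (hdπ_fix : ∀ s', γ * (∑ s, (∑ a, π s a * T s a s') * dπ s) - dπ s'
        + (1 - γ) * d0 s' = 0)
    (hdπ_unique : ∀ d : S → ℝ,
      (∀ s', γ * (∑ s, (∑ a, π s a * T s a s') * d s) - d s'
        + (1 - γ) * d0 s' = 0) → d = dπ)
    -- `dπ0` solves the analogous equation for the behavior policy and is positive:
    (hdπ0_fix : ∀ s', γ * (∑ s, (∑ a, π0 s a * T s a s') * dπ0 s) - dπ0 s'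
        + (1 - γ) * d0 s' = 0)
    (hdπ0_pos : ∀ s, 0 < dπ0 s)
    (w : S → ℝ) :
    (∀ s, w s = dπ s / dπ0 s) ↔
      (∀ f : S → ℝ,
        γ * (∑ s, ∑ a, ∑ s', dπ0 s * π0 s a * T s a s' *
              ((w s * (π s a / π0 s a) - w s') * f s'))
          + (1 - γ) * (∑ s, d0 s * ((1 - w s) * f s)) = 0) :=
  stmt_4_general T π π0 hπ_nonneg habs d0 γ dπ dπ0 hdπ_fix hdπ_unique hdπ0_fix hdπ0_pos w
end

section
/- (Bellman-residual representation of the loss) With L(w,f) as in the discounted density-ratio loss, w* (s) = d_π(s)/d_{π₀}(s), and Πf(s) := f(s) − γ Σ_{s'} T_π(s'|s) f(s'), it holds for all functions w, f that L(w,f) = Σ_s d_{π₀}(s)·(w*(s) − w(s))·Πf(s). -/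
/-!
The importance weight `β = π / π₀` turns the `π₀`-average of `w(s) β(a|s) f(s')` into the
`π`-transition of `f`, so that
`L(w,f) = γ ⟨d_{π₀} w, T_π f⟩ - γ ⟨d_{π₀}, T_{π₀}(w f)⟩ + (1-γ) ⟨d₀, (1-w) f⟩`.
A visitation distribution `d` solves the flow equation `d = γ T_πᵀ d + (1-γ) d₀`, hence
`⟨d, g - γ T_π g⟩ = (1-γ) ⟨d₀, g⟩` for every `g`. Applied to `d_{π₀}` with `g = w f` and to
`d_π` with `g = f`, this eliminates the `d₀`-terms and leaves `⟨d_π - d_{π₀} w, Πf⟩`.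
-/

open Finset

section

variable {S A : Type*} [Fintype S] [Fintype A]

def policyTransition (π : S → A → ℝ) (T : S → A → S → ℝ) (g : S → ℝ) (s : S) : ℝ :=
  ∑ s', (∑ a, π s a * T s a s') * g s'

theorem policyTransition_apply (π : S → A → ℝ) (T : S → A → S → ℝ) (g : S → ℝ) (s : S) :
    policyTransition π T g s = ∑ s', (∑ a, π s a * T s a s') * g s' :=
  rfl

theorem sum_mul_sub_policyTransition_of_flow {π : S → A → ℝ} {T : S → A → S → ℝ} {γ : ℝ}
    {d d0 : S → ℝ}
    (hd : ∀ s', γ * (∑ s, (∑ a, π s a * T s a s') * d s) - d s' + (1 - γ) * d0 s' = 0)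
    (g : S → ℝ) :
    ∑ s, d s * (g s - γ * policyTransition π T g s) = (1 - γ) * ∑ s, d0 s * g s := by
  have hswap : ∑ s, d s * (γ * policyTransition π T g s)
      = ∑ s', γ * (∑ s, (∑ a, π s a * T s a s') * d s) * g s' := by
    simp only [policyTransition, mul_sum, sum_mul]
    rw [sum_comm]
    exact sum_congr rfl fun _ _ => sum_congr rfl fun _ _ => sum_congr rfl fun _ _ => by ring
  rw [mul_sum]
  simp only [mul_sub, sum_sub_distrib, hswap]
  rw [← sum_sub_distrib]
  exact sum_congr rfl fun s' _ => by linear_combination -g s' * hd s'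

theorem sum_importance_weighted_eq {π π0 : S → A → ℝ} (T : S → A → S → ℝ)
    (hπ : ∀ s a, π0 s a = 0 → π s a = 0) (d w f : S → ℝ) :
    ∑ s, ∑ a, ∑ s', d s * π0 s a * T s a s' * ((w s * (π s a / π0 s a) - w s') * f s')
      = ∑ s, d s * (w s * policyTransition π T f s
          - policyTransition π0 T (fun s' => w s' * f s') s) := by
  refine sum_congr rfl fun s _ => ?_
  simp only [policyTransition, sum_mul, mul_sum, mul_sub, ← sum_sub_distrib]
  rw [sum_comm]
  refine sum_congr rfl fun s' _ => sum_congr rfl fun a _ => ?_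
  linear_combination (d s * T s a s' * w s * f s') * div_mul_cancel_of_imp (hπ s a)

end

theorem stmt_5_general {S A : Type*} [Fintype S] [Fintype A]
    (T : S → A → S → ℝ)
    (π π0 : S → A → ℝ)
    (hπ_nonneg : ∀ s a, 0 ≤ π s a)
    (habs : ∀ s a, 0 < π s a → 0 < π0 s a)
    (d0 : S → ℝ)
    (γ : ℝ)
    (dπ dπ0 : S → ℝ)
    (hdπ_fix : ∀ s', γ * (∑ s, (∑ a, π s a * T s a s') * dπ s) - dπ s'
        + (1 - γ) * d0 s' = 0)
    (hdπ0_fix : ∀ s', γ * (∑ s, (∑ a, π0 s a * T s a s') * dπ0 s) - dπ0 s'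
        + (1 - γ) * d0 s' = 0)
    (hdπ0_pos : ∀ s, 0 < dπ0 s)
    (w f : S → ℝ) :
    γ * (∑ s, ∑ a, ∑ s', dπ0 s * π0 s a * T s a s' *
          ((w s * (π s a / π0 s a) - w s') * f s'))
      + (1 - γ) * (∑ s, d0 s * ((1 - w s) * f s))
    = ∑ s, dπ0 s * ((dπ s / dπ0 s - w s) *
        (f s - γ * ∑ s', (∑ a, π s a * T s a s') * f s')) := by
  have hπ : ∀ s a, π0 s a = 0 → π s a = 0 := fun s a h0 =>
    le_antisymm (not_lt.1 fun hpos => (habs s a hpos).ne' h0) (hπ_nonneg s a)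
  have hπ_flow := sum_mul_sub_policyTransition_of_flow hdπ_fix f
  have hπ0_flow := sum_mul_sub_policyTransition_of_flow hdπ0_fix (fun s => w s * f s)
  rw [sum_importance_weighted_eq T hπ]
  simp only [← policyTransition_apply]
  linear_combination (norm := skip) hπ0_flow - hπ_flow
  -- what remains vanishes termwise, because `dπ0 s * (dπ s / dπ0 s) = dπ s`
  simp only [mul_sum, ← sum_sub_distrib, ← sum_add_distrib]
  refine sum_eq_zero fun s _ => ?_
  field_simp [(hdπ0_pos s).ne']
  ring

/-- Bellman-residual representation of the loss:
`L(w,f) = ∑_s dπ0(s) (w*(s) − w(s)) Πf(s)` where `w* = dπ/dπ0` and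
`Πf(s) = f(s) − γ ∑_{s'} Tπ(s'|s) f(s')`. -/
theorem stmt_5 {S A : Type*} [Fintype S] [Fintype A]
    (T : S → A → S → ℝ)
    (hTnonneg : ∀ s a s', 0 ≤ T s a s')
    (hTstoch : ∀ s a, ∑ s', T s a s' = 1)
    (π π0 : S → A → ℝ)
    (hπ_nonneg : ∀ s a, 0 ≤ π s a) (hπ_stoch : ∀ s, ∑ a, π s a = 1)
    (hπ0_nonneg : ∀ s a, 0 ≤ π0 s a) (hπ0_stoch : ∀ s, ∑ a, π0 s a = 1)
    (habs : ∀ s a, 0 < π s a → 0 < π0 s a)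
    (d0 : S → ℝ) (hd0_nonneg : ∀ s, 0 ≤ d0 s) (hd0_sum : ∑ s, d0 s = 1)
    (γ : ℝ) (hγ : γ ∈ Set.Ioo (0 : ℝ) 1)
    (dπ dπ0 : S → ℝ)
    (hdπ_fix : ∀ s', γ * (∑ s, (∑ a, π s a * T s a s') * dπ s) - dπ s'
        + (1 - γ) * d0 s' = 0)
    (hdπ0_fix : ∀ s', γ * (∑ s, (∑ a, π0 s a * T s a s') * dπ0 s) - dπ0 s'
        + (1 - γ) * d0 s' = 0)
    (hdπ0_pos : ∀ s, 0 < dπ0 s)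
    (w f : S → ℝ) :
    γ * (∑ s, ∑ a, ∑ s', dπ0 s * π0 s a * T s a s' *
          ((w s * (π s a / π0 s a) - w s') * f s'))
      + (1 - γ) * (∑ s, d0 s * ((1 - w s) * f s))
    = ∑ s, dπ0 s * ((dπ s / dπ0 s - w s) *
        (f s - γ * ∑ s', (∑ a, π s a * T s a s') * f s')) :=
  stmt_5_general T π π0 hπ_nonneg habs d0 γ dπ dπ0 hdπ_fix hdπ0_fix hdπ0_pos w f
end

section
/- (Reward-error identity) Let γ ∈ (0,1), V^π be the value function solving V^π(s) = r_π(s) + γ Σ_{s'} T_π(s'|s) V^π(s'), where r_π(s) = Σ_a π(a|s) r(s,a). Define R_π[w] = Σ_{s} d_{π₀}(s) w(s) r_π(s) and R_π = Σ_s d_π(s) r_π(s). Then L(w, V^π) = R_π − R_π[w], where L is the discounted density-ratio loss. Consequently, if ±V^π belong to a function class F, then |R_π[w] − R_π| ≤ max_{f∈F} L(w,f). -/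
/-!
Write `P_π f (s) = ∑_{s'} (∑_a π(a|s) T(s'|s,a)) f(s')`. Summing the fixed-point equation of a
discounted visitation distribution `d` against any `f` gives `∑_s d(s) (f - γ P_π f)(s) = (1 - γ) E_{d₀}[f]`.
Used once with `d_{π₀}` (to remove the `w(s')` term of the loss) and once with `d_π`, it turns the loss
into `L(w, f) = ∑_s (d_π(s) - d_{π₀}(s) w(s)) (f - γ P_π f)(s)`, and the Bellman equation says
`V^π - γ P_π V^π = r_π`. The bound follows because `L(w, ·)` is odd.
-/

open Finset

section Visitation

variable {S : Type*} [Fintype S] {P : S → S → ℝ} {d d0 : S → ℝ} {γ : ℝ}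

theorem visitation_sum_mul_transition
    (hd : ∀ s', γ * (∑ s, P s s' * d s) - d s' + (1 - γ) * d0 s' = 0) (g : S → ℝ) :
    γ * ∑ s, d s * ∑ s', P s s' * g s' = ∑ s', (d s' - (1 - γ) * d0 s') * g s' := by
  simp only [mul_sum]
  rw [sum_comm]
  refine sum_congr rfl fun s' _ => ?_
  have hflow : γ * ∑ s, P s s' * d s = d s' - (1 - γ) * d0 s' := by linarith [hd s']
  rw [← hflow, mul_sum, sum_mul]
  exact sum_congr rfl fun s _ => by ring

theorem visitation_sum_mul_bellmanResidual
    (hd : ∀ s', γ * (∑ s, P s s' * d s) - d s' + (1 - γ) * d0 s' = 0) (f : S → ℝ) :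
    ∑ s, d s * (f s - γ * ∑ s', P s s' * f s') = (1 - γ) * ∑ s, d0 s * f s := by
  have hflow := visitation_sum_mul_transition hd f
  simp only [mul_sub, sum_sub_distrib, mul_left_comm (d _) γ, ← mul_sum, hflow, sub_mul,
    mul_assoc]
  ring

end Visitation

section Loss

variable {S A : Type*} [Fintype S] [Fintype A]

theorem densityRatioLoss_eq_sum_mul_bellmanResidual
    (T : S → A → S → ℝ) {π π0 : S → A → ℝ}
    (hπ_nonneg : ∀ s a, 0 ≤ π s a) (habs : ∀ s a, 0 < π s a → 0 < π0 s a)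
    {d0 dπ dπ0 : S → ℝ} {γ : ℝ}
    (hdπ_fix : ∀ s', γ * (∑ s, (∑ a, π s a * T s a s') * dπ s) - dπ s'
        + (1 - γ) * d0 s' = 0)
    (hdπ0_fix : ∀ s', γ * (∑ s, (∑ a, π0 s a * T s a s') * dπ0 s) - dπ0 s'
        + (1 - γ) * d0 s' = 0)
    (w f : S → ℝ) :
    γ * (∑ s, ∑ a, ∑ s', dπ0 s * π0 s a * T s a s' *
          ((w s * (π s a / π0 s a) - w s') * f s'))
        + (1 - γ) * (∑ s, d0 s * ((1 - w s) * f s))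
      = ∑ s, (dπ s - dπ0 s * w s) * (f s - γ * ∑ s', (∑ a, π s a * T s a s') * f s') := by
  -- where `π₀ = 0` the junk value `π / 0 = 0` is harmless, since then `π = 0`
  have hratio : ∀ s a, π0 s a * (π s a / π0 s a) = π s a := fun s a =>
    mul_div_cancel_of_imp' fun h0 =>
      le_antisymm (not_lt.1 fun hpos => (habs s a hpos).ne' h0) (hπ_nonneg s a)
  have hsplit : ∀ s, ∑ a, ∑ s', dπ0 s * π0 s a * T s a s' *
        ((w s * (π s a / π0 s a) - w s') * f s')
      = dπ0 s * w s * ∑ s', (∑ a, π s a * T s a s') * f s'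
        - dπ0 s * ∑ s', (∑ a, π0 s a * T s a s') * (w s' * f s') := by
    intro s
    simp only [mul_sum, sum_mul, ← sum_sub_distrib]
    rw [sum_comm]
    refine sum_congr rfl fun s' _ => sum_congr rfl fun a _ => ?_
    linear_combination (dπ0 s * T s a s' * w s * f s') * hratio s a
  rw [sum_congr rfl fun s _ => hsplit s, sum_sub_distrib, mul_sub,
    visitation_sum_mul_transition hdπ0_fix]
  simp only [sub_mul (dπ _), sum_sub_distrib, visitation_sum_mul_bellmanResidual hdπ_fix]
  simp only [mul_sub, sub_mul, one_mul, sum_sub_distrib, mul_sum, mul_assoc, mul_left_comm γ]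
  ring

end Loss

theorem abs_le_csSup_image_of_neg_mem {α : Type*} {g : α → ℝ} {F : Set α} {x y : α}
    (hx : x ∈ F) (hy : y ∈ F) (hneg : g y = -g x) (hbdd : BddAbove (g '' F)) :
    |g x| ≤ sSup (g '' F) :=
  abs_le'.2 ⟨le_csSup hbdd ⟨x, hx, rfl⟩, hneg ▸ le_csSup hbdd ⟨y, hy, rfl⟩⟩

theorem stmt_8_general {S A : Type*} [Fintype S] [Fintype A]
    (T : S → A → S → ℝ)
    (π π0 : S → A → ℝ)
    (hπ_nonneg : ∀ s a, 0 ≤ π s a)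
    (habs : ∀ s a, 0 < π s a → 0 < π0 s a)
    (d0 : S → ℝ)
    (γ : ℝ)
    (dπ dπ0 : S → ℝ)
    (hdπ_fix : ∀ s', γ * (∑ s, (∑ a, π s a * T s a s') * dπ s) - dπ s'
        + (1 - γ) * d0 s' = 0)
    (hdπ0_fix : ∀ s', γ * (∑ s, (∑ a, π0 s a * T s a s') * dπ0 s) - dπ0 s'
        + (1 - γ) * d0 s' = 0)
    (r : S → A → ℝ)
    -- `rπ(s) = ∑_a π(a|s) r(s,a)`; `Vπ` solves the discounted Bellman equation:
    (Vπ : S → ℝ)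
    (hV : ∀ s, Vπ s = (∑ a, π s a * r s a)
        + γ * ∑ s', (∑ a, π s a * T s a s') * Vπ s')
    -- the loss functional `L`:
    (L : (S → ℝ) → (S → ℝ) → ℝ)
    (hL : ∀ w f, L w f =
      γ * (∑ s, ∑ a, ∑ s', dπ0 s * π0 s a * T s a s' *
            ((w s * (π s a / π0 s a) - w s') * f s'))
        + (1 - γ) * (∑ s, d0 s * ((1 - w s) * f s)))
    (w : S → ℝ) :
    (L w Vπ = (∑ s, dπ s * ∑ a, π s a * r s a)
        - (∑ s, dπ0 s * w s * ∑ a, π s a * r s a)) ∧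
    (∀ F : Set (S → ℝ), Vπ ∈ F → (fun s => -Vπ s) ∈ F →
      BddAbove ((fun f => L w f) '' F) →
      |(∑ s, dπ0 s * w s * ∑ a, π s a * r s a)
        - (∑ s, dπ s * ∑ a, π s a * r s a)| ≤ sSup ((fun f => L w f) '' F)) := by
  have hresidual : ∀ s, Vπ s - γ * ∑ s', (∑ a, π s a * T s a s') * Vπ s' = ∑ a, π s a * r s a :=
    fun s => by linarith [hV s]
  have hidentity : L w Vπ = (∑ s, dπ s * ∑ a, π s a * r s a)
      - (∑ s, dπ0 s * w s * ∑ a, π s a * r s a) := by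
    rw [hL, densityRatioLoss_eq_sum_mul_bellmanResidual T hπ_nonneg habs hdπ_fix hdπ0_fix]
    simp only [hresidual, sub_mul, sum_sub_distrib]
  have hodd : L w (fun s => -Vπ s) = -L w Vπ := by
    simp only [hL, mul_neg, sum_neg_distrib]
    ring
  refine ⟨hidentity, fun F hVF hnegVF hbdd => ?_⟩
  rw [abs_sub_comm, ← hidentity]
  exact abs_le_csSup_image_of_neg_mem hVF hnegVF hodd hbdd

/-- Reward-error identity: `L(w, Vπ) = Rπ − Rπ[w]`; consequently, if
`±Vπ ∈ F` then `|Rπ[w] − Rπ| ≤ max_{f∈F} L(w,f)`. -/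
theorem stmt_8 {S A : Type*} [Fintype S] [Fintype A]
    (T : S → A → S → ℝ)
    (hTnonneg : ∀ s a s', 0 ≤ T s a s')
    (hTstoch : ∀ s a, ∑ s', T s a s' = 1)
    (π π0 : S → A → ℝ)
    (hπ_nonneg : ∀ s a, 0 ≤ π s a) (hπ_stoch : ∀ s, ∑ a, π s a = 1)
    (hπ0_nonneg : ∀ s a, 0 ≤ π0 s a) (hπ0_stoch : ∀ s, ∑ a, π0 s a = 1)
    (habs : ∀ s a, 0 < π s a → 0 < π0 s a)
    (d0 : S → ℝ) (hd0_nonneg : ∀ s, 0 ≤ d0 s) (hd0_sum : ∑ s, d0 s = 1)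
    (γ : ℝ) (hγ : γ ∈ Set.Ioo (0 : ℝ) 1)
    (dπ dπ0 : S → ℝ)
    (hdπ_fix : ∀ s', γ * (∑ s, (∑ a, π s a * T s a s') * dπ s) - dπ s'
        + (1 - γ) * d0 s' = 0)
    (hdπ0_fix : ∀ s', γ * (∑ s, (∑ a, π0 s a * T s a s') * dπ0 s) - dπ0 s'
        + (1 - γ) * d0 s' = 0)
    (hdπ0_pos : ∀ s, 0 < dπ0 s)
    (r : S → A → ℝ)
    -- `rπ(s) = ∑_a π(a|s) r(s,a)`; `Vπ` solves the discounted Bellman equation: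
    (Vπ : S → ℝ)
    (hV : ∀ s, Vπ s = (∑ a, π s a * r s a)
        + γ * ∑ s', (∑ a, π s a * T s a s') * Vπ s')
    -- the loss functional `L`:
    (L : (S → ℝ) → (S → ℝ) → ℝ)
    (hL : ∀ w f, L w f =
      γ * (∑ s, ∑ a, ∑ s', dπ0 s * π0 s a * T s a s' *
            ((w s * (π s a / π0 s a) - w s') * f s'))
        + (1 - γ) * (∑ s, d0 s * ((1 - w s) * f s)))
    (w : S → ℝ) :
    (L w Vπ = (∑ s, dπ s * ∑ a, π s a * r s a)
        - (∑ s, dπ0 s * w s * ∑ a, π s a * r s a)) ∧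
    (∀ F : Set (S → ℝ), Vπ ∈ F → (fun s => -Vπ s) ∈ F →
      BddAbove ((fun f => L w f) '' F) →
      |(∑ s, dπ0 s * w s * ∑ a, π s a * r s a)
        - (∑ s, dπ s * ∑ a, π s a * r s a)| ≤ sSup ((fun f => L w f) '' F)) :=
  stmt_8_general T π π0 hπ_nonneg habs d0 γ dπ dπ0 hdπ_fix hdπ0_fix r Vπ hV L hL w
end

section
/- (Error lower bound via indicator discriminators) Let γ ∈ (0,1) and for each state s̃ define f_{s̃}(s) = Σ_{t=0}^∞ γ^t T_π^t(s̃|s). If the discriminator class F contains ±f_{s̃} for every state s̃, then max_{f∈F} L(w,f) ≥ max_{s̃} |d_π(s̃) − w(s̃)·d_{π₀}(s̃)|, where L(w,f) = Σ_s d_{π₀}(s)(w*(s)−w(s))·Πf(s), w*(s) = d_π(s)/d_{π₀}(s), and Πf(s) = f(s) − γ Σ_{s'}T_π(s'|s)f(s'). -/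
/-!
The function `f_j = ∑ₜ γᵗ (Pᵗ) · j` is the `j`-th column of the resolvent `(1 - γP)⁻¹`, so
its Bellman residual `f_j - γ P f_j` is the indicator of `j`. Plugging `±f_j` into the linear
functional `L w` therefore picks out the single error term `±(d(j) - w(j) d₀(j))`, and both signs
are bounded by the supremum over the discriminator class.
-/

open Finset Matrix

namespace Matrix

variable {n : Type*} [Fintype n] [DecidableEq n]

noncomputable def discountedVisits (P : Matrix n n ℝ) (γ : ℝ) (i j : n) : ℝ :=
  ∑' t : ℕ, γ ^ t * (P ^ t) i j

/-- The paper's `Πf`. -/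
def bellmanResidual (P : Matrix n n ℝ) (γ : ℝ) (f : n → ℝ) (i : n) : ℝ :=
  f i - γ * ∑ k, P i k * f k

lemma summable_geometric_mul_pow_apply {P : Matrix n n ℝ}
    (hP : P ∈ rowStochastic ℝ n) {γ : ℝ} (hγ0 : 0 ≤ γ) (hγ1 : γ < 1) (i j : n) :
    Summable fun t : ℕ => γ ^ t * (P ^ t) i j :=
  Summable.of_nonneg_of_le
    (fun t => mul_nonneg (pow_nonneg hγ0 t) (nonneg_of_mem_rowStochastic (pow_mem hP t)))
    (fun t => mul_le_of_le_one_right (pow_nonneg hγ0 t)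
      (le_one_of_mem_rowStochastic (pow_mem hP t)))
    (summable_geometric_of_lt_one hγ0 hγ1)

lemma bellmanResidual_discountedVisits {P : Matrix n n ℝ} {γ : ℝ} {j : n}
    (hsum : ∀ i, Summable fun t : ℕ => γ ^ t * (P ^ t) i j) (i : n) :
    bellmanResidual P γ (fun k => discountedVisits P γ k j) i = if i = j then 1 else 0 := by
  have hshift : γ * ∑ k, P i k * discountedVisits P γ k j =
      ∑' t : ℕ, γ ^ (t + 1) * (P ^ (t + 1)) i j := by
    simp only [discountedVisits, ← tsum_mul_left]
    rw [← Summable.tsum_finsetSum fun k _ => (hsum k).mul_left (P i k), ← tsum_mul_left]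
    congr 1 with t
    rw [pow_succ', pow_succ', mul_apply, Finset.mul_sum, Finset.mul_sum]
    exact Finset.sum_congr rfl fun k _ => by ring
  rw [bellmanResidual, hshift, discountedVisits, (hsum i).tsum_eq_zero_add]
  simp [one_apply]

end Matrix

/-- Error lower bound via indicator discriminators: if the discriminator
class `F` contains `±f_{st}` for `f_{st}(s) = ∑_{t=0}^∞ γ^t Tπ^t(st|s)`, then
`max_{f∈F} L(w,f) ≥ max_{st} |dπ(st) − w(st) dπ0(st)|`, where
`L(w,f) = ∑_s dπ0(s)(w*(s)−w(s)) Πf(s)`, `w* = dπ/dπ0`,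
`Πf(s) = f(s) − γ ∑_{s'} Tπ(s'|s) f(s')`. -/
theorem stmt_9 {S : Type*} [Fintype S] [DecidableEq S]
    (Tπ : Matrix S S ℝ)
    (hTnonneg : ∀ s s', 0 ≤ Tπ s s')
    (hTstoch : ∀ s, ∑ s', Tπ s s' = 1)
    (γ : ℝ) (hγ : γ ∈ Set.Ioo (0 : ℝ) 1)
    (dπ dπ0 : S → ℝ)
    (hdπ0_pos : ∀ s, 0 < dπ0 s)
    (L : (S → ℝ) → (S → ℝ) → ℝ)
    (hL : ∀ w f, L w f = ∑ s, dπ0 s * ((dπ s / dπ0 s - w s) *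
        (f s - γ * ∑ s', Tπ s s' * f s')))
    (fdisc : S → S → ℝ)
    (hfdisc : ∀ st s, fdisc st s = ∑' t : ℕ, γ ^ t * (Tπ ^ t) s st)
    (w : S → ℝ)
    (F : Set (S → ℝ))
    (hFpos : ∀ st, fdisc st ∈ F)
    (hFneg : ∀ st, (fun s => -fdisc st s) ∈ F)
    (hBdd : BddAbove ((fun f => L w f) '' F)) :
    ∀ st, |dπ st - w st * dπ0 st| ≤ sSup ((fun f => L w f) '' F) := by
  intro st
  have hT : Tπ ∈ rowStochastic ℝ S := mem_rowStochastic_iff_sum.2 ⟨hTnonneg, hTstoch⟩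
  have hres : ∀ s, bellmanResidual Tπ γ (fdisc st) s = if s = st then 1 else 0 := by
    rw [show fdisc st = fun s => discountedVisits Tπ γ s st from funext (hfdisc st)]
    exact bellmanResidual_discountedVisits
      (summable_geometric_mul_pow_apply hT hγ.1.le hγ.2 · st)
  have hval : L w (fdisc st) = dπ st - w st * dπ0 st := by
    rw [hL]
    change ∑ s, dπ0 s * ((dπ s / dπ0 s - w s) * bellmanResidual Tπ γ (fdisc st) s) = _
    simp only [hres, mul_ite, mul_one, mul_zero, sum_ite_eq', mem_univ, if_true]
    field_simp [(hdπ0_pos st).ne']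
  have hval_neg : L w (fun s => -fdisc st s) = -(dπ st - w st * dπ0 st) := by
    rw [← hval, hL, hL, ← sum_neg_distrib]
    congr 1 with s
    simp only [mul_neg, sum_neg_distrib]
    ring
  have hle : ∀ f ∈ F, L w f ≤ sSup ((fun f => L w f) '' F) :=
    fun f hf => le_csSup hBdd ⟨f, hf, rfl⟩
  exact abs_le.2 ⟨by linarith [hval_neg ▸ hle _ (hFneg st)], hval ▸ hle _ (hFpos st)⟩
end

section
/- (Variance of trajectory importance weight in the circle MDP) With C = (1−ρ)/ρ, F ∼ Binomial(T+1, ρ), and W = C^{2F−(T+1)}, one has E[W²] = A_ρ^{T+1} where A_ρ = (ρ³ + (1−ρ)³)/((1−ρ)ρ), and hence Var(W) = A_ρ^{T+1} − 1. Moreover A_ρ > 1 for ρ ≠ 1/2 and A_ρ = 1 for ρ = 1/2, so the variance grows exponentially in T when ρ ≠ 1/2. -/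
/-!
Writing `C^(2k-n) = (C²)^k / Cⁿ`, every moment of the weight is a binomial moment generating
function: `E[W^m] = ((ρ C^(2m) + 1 - ρ) / C^m)^n`. For `C = (1-ρ)/ρ` the base is `1` when
`m = 1` and `A_ρ` when `m = 2`, and `A_ρ = 1 + (1-2ρ)² / (ρ(1-ρ))`.
-/

open Finset

theorem sum_choose_mul_pow_mul_pow (ρ a : ℝ) (n : ℕ) :
    ∑ k ∈ range (n + 1), n.choose k * ρ ^ k * (1 - ρ) ^ (n - k) * a ^ k
      = (ρ * a + (1 - ρ)) ^ n := by
  rw [add_pow]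
  refine sum_congr rfl fun k _ => ?_
  rw [mul_pow]
  ring

theorem sum_choose_mul_pow_mul_zpow_pow {C : ℝ} (hC : C ≠ 0) (ρ : ℝ) (n m : ℕ) :
    ∑ k ∈ range (n + 1), n.choose k * ρ ^ k * (1 - ρ) ^ (n - k) * (C ^ (2 * (k : ℤ) - n)) ^ m
      = ((ρ * C ^ (2 * m) + (1 - ρ)) / C ^ m) ^ n := by
  have hweight : ∀ k : ℕ, (C ^ (2 * (k : ℤ) - n)) ^ m = (C ^ (2 * m)) ^ k / (C ^ m) ^ n := by
    intro k
    rw [show 2 * (k : ℤ) - n = ((2 * k : ℕ) : ℤ) - (n : ℤ) by push_cast; ring,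
      zpow_sub₀ hC, zpow_natCast, zpow_natCast, div_pow, ← pow_mul, ← pow_mul, ← pow_mul,
      ← pow_mul]
    ring_nf
  simp_rw [hweight, ← mul_div_assoc, ← sum_div, sum_choose_mul_pow_mul_pow, div_pow]

theorem odds_moment_base_one {ρ : ℝ} (h0 : ρ ≠ 0) (h1 : 1 - ρ ≠ 0) :
    (ρ * ((1 - ρ) / ρ) ^ 2 + (1 - ρ)) / ((1 - ρ) / ρ) = 1 := by
  rw [div_eq_one_iff_eq (div_ne_zero h1 h0)]
  field_simp
  ring

theorem odds_moment_base_two {ρ : ℝ} (h0 : ρ ≠ 0) (h1 : 1 - ρ ≠ 0) :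
    (ρ * ((1 - ρ) / ρ) ^ 4 + (1 - ρ)) / ((1 - ρ) / ρ) ^ 2
      = (ρ ^ 3 + (1 - ρ) ^ 3) / ((1 - ρ) * ρ) := by
  rw [div_eq_div_iff (by positivity) (mul_ne_zero h1 h0)]
  field_simp
  ring

theorem cube_add_one_sub_cube_div_eq_one_add {ρ : ℝ} (h0 : ρ ≠ 0) (h1 : 1 - ρ ≠ 0) :
    (ρ ^ 3 + (1 - ρ) ^ 3) / ((1 - ρ) * ρ) = 1 + (1 - 2 * ρ) ^ 2 / ((1 - ρ) * ρ) := by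
  field_simp
  ring

/-- Variance of the trajectory importance weight in the circle MDP:
with `C = (1−ρ)/ρ`, `F ∼ Binomial(T+1, ρ)`, `W = C^(2F−(T+1))`:
`E[W²] = A_ρ^(T+1)` where `A_ρ = (ρ³+(1−ρ)³)/((1−ρ)ρ)`, hence
`Var(W) = E[W²] − E[W]² = A_ρ^(T+1) − 1`; moreover `A_ρ > 1` iff `ρ ≠ 1/2`. -/
theorem stmt_11 (ρ : ℝ) (hρ : ρ ∈ Set.Ioo (0 : ℝ) 1) (T : ℕ)
    (C : ℝ) (hC : C = (1 - ρ) / ρ)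
    (A : ℝ) (hA : A = (ρ ^ 3 + (1 - ρ) ^ 3) / ((1 - ρ) * ρ))
    (p : ℕ → ℝ)
    (hp : ∀ k, p k = (T + 1).choose k * ρ ^ k * (1 - ρ) ^ (T + 1 - k))
    (W : ℕ → ℝ) (hW : ∀ k, W k = C ^ (2 * (k : ℤ) - (T + 1))) :
    -- second moment:
    (∑ k ∈ Finset.range (T + 2), p k * (W k) ^ 2 = A ^ (T + 1)) ∧
    -- variance (using E[W] = 1):
    (∑ k ∈ Finset.range (T + 2), p k * (W k) ^ 2
        - (∑ k ∈ Finset.range (T + 2), p k * W k) ^ 2 = A ^ (T + 1) - 1) ∧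
    (ρ ≠ 1 / 2 → 1 < A) ∧ (ρ = 1 / 2 → A = 1) := by
  obtain ⟨hρ0, hρ1⟩ := hρ
  have h0 : ρ ≠ 0 := hρ0.ne'
  have h1 : 1 - ρ ≠ 0 := (sub_pos.2 hρ1).ne'
  have hmoment : ∀ m : ℕ, ∑ k ∈ range (T + 2), p k * W k ^ m
      = ((ρ * C ^ (2 * m) + (1 - ρ)) / C ^ m) ^ (T + 1) := by
    intro m
    rw [← sum_choose_mul_pow_mul_zpow_pow (hC ▸ div_ne_zero h1 h0)]
    refine sum_congr rfl fun k _ => ?_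
    rw [hp, hW]
    push_cast
    rfl
  have hmean : ∑ k ∈ range (T + 2), p k * W k = 1 := by
    simpa only [pow_one, mul_one, hC, odds_moment_base_one h0 h1, one_pow] using hmoment 1
  have hsecond : ∑ k ∈ range (T + 2), p k * W k ^ 2 = A ^ (T + 1) := by
    rw [hmoment, show 2 * 2 = 4 from rfl, hC, hA, odds_moment_base_two h0 h1]
  have hA' : A = 1 + (1 - 2 * ρ) ^ 2 / ((1 - ρ) * ρ) := hA ▸ cube_add_one_sub_cube_div_eq_one_add h0 h1
  refine ⟨hsecond, by rw [hsecond, hmean]; ring, fun hne => ?_, fun he => by rw [hA', he]; norm_num⟩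
  have h2 : 1 - 2 * ρ ≠ 0 := fun h => hne (by linarith)
  have h1' : 0 < 1 - ρ := by linarith
  exact hA' ▸ lt_add_of_pos_right 1 (by positivity)
end

section
/- (First cross moment) With the same setup, E[W²R] = ((1−ρ)²/ρ)·A_ρ^T, where R = F/(T+1), W = C^{2F−(T+1)}, C = (1−ρ)/ρ, F ∼ Binomial(T+1,ρ), and A_ρ = (ρ³+(1−ρ)³)/((1−ρ)ρ). -/
/-!
Writing `x = ρ C²` and `y = (1 - ρ) C⁻²`, the weight `W k ² = C ^ (4k - 2(T+1))` tilts the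
binomial law termwise into `(T+1).choose k * x ^ k * y ^ (T+1-k)`, so `E[W²R]` is the first
moment of this unnormalised binomial divided by `T + 1`, namely `x (x + y) ^ T`
(the derivative of `(x + y) ^ (T+1)` in `x`, times `x`). Finally `x = (1 - ρ)² / ρ` and
`x + y = A`.
-/

open Finset

theorem sum_range_choose_mul_pow_mul_cast {R : Type*} [CommSemiring R] (x y : R) (n : ℕ) :
    ∑ k ∈ range (n + 2), ((n + 1).choose k : R) * x ^ k * y ^ (n + 1 - k) * k
      = (n + 1) * x * (x + y) ^ n := by
  rw [sum_range_succ', Nat.cast_zero, mul_zero, add_zero, add_pow, mul_sum]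
  refine sum_congr rfl fun j _ => ?_
  have hchoose : ((n + 1).choose (j + 1) : R) * (j + 1) = (n + 1) * n.choose j := by
    simpa using congrArg (Nat.cast (R := R)) (Nat.add_one_mul_choose_eq n j).symm
  rw [Nat.add_sub_add_right, Nat.cast_add_one]
  calc _ = ((n + 1).choose (j + 1) : R) * (j + 1) * x ^ (j + 1) * y ^ (n - j) := by ring
    _ = _ := by rw [hchoose]; ring

theorem zpow_two_mul_sub_sq {K : Type*} [DivisionRing K] {C : K} (hC : C ≠ 0) {k n : ℕ}
    (hk : k ≤ n) : (C ^ (2 * (k : ℤ) - n)) ^ 2 = (C ^ 2) ^ k * (C ^ 2)⁻¹ ^ (n - k) := by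
  rw [inv_pow, ← pow_mul, ← pow_mul, ← zpow_natCast C (2 * k), ← zpow_natCast C (2 * (n - k)),
    ← zpow_neg, ← zpow_add₀ hC, ← zpow_natCast _ 2, ← zpow_mul]
  congr 1
  push_cast [hk]
  ring

/-- First cross moment in the circle MDP: with the same setup,
`E[W²R] = ((1−ρ)²/ρ) · A_ρ^T`. -/
theorem stmt_13 (ρ : ℝ) (hρ : ρ ∈ Set.Ioo (0 : ℝ) 1) (T : ℕ)
    (C : ℝ) (hC : C = (1 - ρ) / ρ)
    (A : ℝ) (hA : A = (ρ ^ 3 + (1 - ρ) ^ 3) / ((1 - ρ) * ρ))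
    (p : ℕ → ℝ)
    (hp : ∀ k, p k = (T + 1).choose k * ρ ^ k * (1 - ρ) ^ (T + 1 - k))
    (W : ℕ → ℝ) (hW : ∀ k, W k = C ^ (2 * (k : ℤ) - (T + 1)))
    (R : ℕ → ℝ) (hR : ∀ k, R k = (k : ℝ) / (T + 1)) :
    ∑ k ∈ Finset.range (T + 2), p k * (W k) ^ 2 * R k
      = ((1 - ρ) ^ 2 / ρ) * A ^ T := by
  obtain ⟨hρ0, hρ1⟩ := hρ
  have h1ρ : 1 - ρ ≠ 0 := (sub_pos.2 hρ1).ne'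
  have hC0 : C ≠ 0 := by rw [hC]; exact div_ne_zero h1ρ hρ0.ne'
  set x := ρ * C ^ 2
  set y := (1 - ρ) * (C ^ 2)⁻¹
  have hx : x = (1 - ρ) ^ 2 / ρ := by simp only [x, hC]; field_simp
  have hxy : x + y = A := by simp only [x, y, hA, hC]; field_simp; ring
  have htilt : ∀ k ∈ range (T + 2), p k * W k ^ 2 * R k
      = ((T + 1).choose k * x ^ k * y ^ (T + 1 - k) * k) / (T + 1) := by
    intro k hk
    have hkT : k ≤ T + 1 := Nat.lt_succ_iff.mp (mem_range.mp hk)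
    rw [hp, hW, hR, ← Nat.cast_add_one, zpow_two_mul_sub_sq hC0 hkT]
    simp only [x, y, mul_pow]
    ring
  rw [sum_congr rfl htilt, ← sum_div, sum_range_choose_mul_pow_mul_cast, hxy, ← hx]
  field_simp
end

section
/- (Rao-Blackwellization of importance weights / step-wise IS) Under the setup of trajectory importance sampling, E_{τ∼p_{π₀}}[w_{0:T}(τ) | τ_{0:t}] = w_{0:t}(τ) := Π_{k=0}^t π(a_k|s_k)/π₀(a_k|s_k), and consequently E_{τ∼p_{π₀}}[w_{0:T}(τ)·r_t] = E_{τ∼p_{π₀}}[w_{0:t}(τ)·r_t] for any reward r_t that is a function of τ_{0:t}. -/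
/-!
Summing the trajectory law `d0(s₀) ∏ P(aₖ|sₖ) ∏ K(sₖ₊₁|sₖ,aₖ)` over the last action and state
leaves the law of the shorter trajectory, since the rows of `K` and `P` sum to one; by
induction, the prefix `τ_{0:t}` of a horizon-`T` trajectory has the horizon-`t` law. Absolute
continuity gives `p_{π₀} · w = p_π` at every horizon, so both sides of each claim are
expectations of a function of the prefix under `p_π`, computed at horizon `t`.
-/

open Finset

theorem Fintype.sum_fun_fin_succ_eq_sum_snoc {S M : Type*} [Fintype S] [AddCommMonoid M] {n : ℕ}
    (F : (Fin (n + 1) → S) → M) :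
    ∑ f : Fin (n + 1) → S, F f = ∑ g : Fin n → S, ∑ s : S, F (Fin.snoc g s) := by
  rw [← Fintype.sum_equiv (Fin.snocEquiv fun _ => S) (fun p => F (Fin.snoc p.2 p.1)) F
    (fun _ => rfl), Fintype.sum_prod_type, Finset.sum_comm]

section Trajectories

variable {S A : Type*}

/-- A trajectory `(s₀, …, sₙ; a₀, …, aₙ)` of horizon `n`: `n + 1` states and actions. -/
abbrev Traj (S A : Type*) (n : ℕ) := (Fin (n + 1) → S) × (Fin (n + 1) → A)

def trajWeight (d0 : S → ℝ) (P : S → A → ℝ) (Tker : S → A → S → ℝ) {n : ℕ} (τ : Traj S A n) :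
    ℝ :=
  d0 (τ.1 0) * (∏ k, P (τ.1 k) (τ.2 k)) *
    ∏ k : Fin n, Tker (τ.1 k.castSucc) (τ.2 k.castSucc) (τ.1 k.succ)

noncomputable def importanceWeight (π π0 : S → A → ℝ) {n : ℕ} (τ : Traj S A n) : ℝ :=
  ∏ k, π (τ.1 k) (τ.2 k) / π0 (τ.1 k) (τ.2 k)

def trajPrefix {m n : ℕ} (h : m ≤ n) (τ : Traj S A n) : Traj S A m :=
  (fun k => τ.1 (Fin.castLE (Nat.succ_le_succ h) k),
    fun k => τ.2 (Fin.castLE (Nat.succ_le_succ h) k))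

theorem trajPrefix_snoc {n : ℕ} (g : Fin (n + 1) → S) (y : Fin (n + 1) → A) (s : S) (a : A) :
    trajPrefix n.le_succ ((Fin.snoc g s, Fin.snoc y a) : Traj S A (n + 1)) = (g, y) := by
  simp only [trajPrefix, Prod.mk.injEq]
  exact ⟨funext fun k => Fin.snoc_castSucc (α := fun _ => S) ..,
    funext fun k => Fin.snoc_castSucc (α := fun _ => A) ..⟩

theorem trajWeight_snoc (d0 : S → ℝ) (P : S → A → ℝ) (Tker : S → A → S → ℝ) {n : ℕ}
    (g : Fin (n + 1) → S) (y : Fin (n + 1) → A) (s : S) (a : A) :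
    trajWeight d0 P Tker ((Fin.snoc g s, Fin.snoc y a) : Traj S A (n + 1)) =
      trajWeight d0 P Tker ((g, y) : Traj S A n) * Tker (g (Fin.last n)) (y (Fin.last n)) s *
        P s a := by
  simp only [trajWeight, Fin.prod_univ_castSucc (n := n + 1), Fin.prod_univ_castSucc (n := n),
    Fin.snoc_castSucc, Fin.snoc_last, Fin.succ_last, ← Fin.castSucc_succ, ← Fin.castSucc_zero]
  ring

section Marginal

variable [Fintype S] [Fintype A] {d0 : S → ℝ} {P : S → A → ℝ} {Tker : S → A → S → ℝ}

theorem sum_traj_succ_eq_sum_snoc {M : Type*} [AddCommMonoid M] {n : ℕ}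
    (F : Traj S A (n + 1) → M) :
    ∑ τ, F τ = ∑ g : Fin (n + 1) → S, ∑ y : Fin (n + 1) → A, ∑ s, ∑ a,
      F (Fin.snoc g s, Fin.snoc y a) := by
  simp only [Fintype.sum_prod_type, Fintype.sum_fun_fin_succ_eq_sum_snoc (n := n + 1)]
  exact Finset.sum_congr rfl fun g _ => Finset.sum_comm

theorem sum_trajWeight_mul_trajPrefix_succ (hTker : ∀ s a, ∑ s', Tker s a s' = 1)
    (hP : ∀ s, ∑ a, P s a = 1) {n : ℕ} (f : Traj S A n → ℝ) :
    ∑ τ : Traj S A (n + 1), trajWeight d0 P Tker τ * f (trajPrefix n.le_succ τ) =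
      ∑ σ : Traj S A n, trajWeight d0 P Tker σ * f σ := by
  rw [sum_traj_succ_eq_sum_snoc, Fintype.sum_prod_type]
  refine Finset.sum_congr rfl fun g _ => Finset.sum_congr rfl fun y _ => ?_
  simp only [trajPrefix_snoc, trajWeight_snoc]
  set T := Tker (g (Fin.last n)) (y (Fin.last n))
  calc ∑ s, ∑ a, trajWeight d0 P Tker (g, y) * T s * P s a * f (g, y)
      = ∑ s, trajWeight d0 P Tker (g, y) * f (g, y) * T s * ∑ a, P s a := by
        simp only [Finset.mul_sum]; congr! 2; ring
    _ = trajWeight d0 P Tker (g, y) * f (g, y) := by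
        simp only [hP, mul_one, ← Finset.mul_sum, show ∑ s, T s = 1 from hTker _ _]

theorem sum_trajWeight_mul_comp_trajPrefix (hTker : ∀ s a, ∑ s', Tker s a s' = 1)
    (hP : ∀ s, ∑ a, P s a = 1) {m n : ℕ} (h : m ≤ n) (f : Traj S A m → ℝ) :
    ∑ τ : Traj S A n, trajWeight d0 P Tker τ * f (trajPrefix h τ) =
      ∑ σ : Traj S A m, trajWeight d0 P Tker σ * f σ := by
  induction n, h using Nat.le_induction with
  | base => rfl
  | succ n h ih =>
    exact (sum_trajWeight_mul_trajPrefix_succ hTker hP (f ∘ trajPrefix h)).trans ih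

theorem sum_filter_trajPrefix_eq_trajWeight [DecidableEq S] [DecidableEq A]
    (hTker : ∀ s a, ∑ s', Tker s a s' = 1) (hP : ∀ s, ∑ a, P s a = 1) {m n : ℕ} (h : m ≤ n)
    (σ : Traj S A m) :
    ∑ τ ∈ univ.filter (fun τ => trajPrefix h τ = σ), trajWeight d0 P Tker τ =
      trajWeight d0 P Tker σ := by
  have := sum_trajWeight_mul_comp_trajPrefix (d0 := d0) hTker hP h
    (fun σ' => if σ' = σ then 1 else 0)
  rw [Finset.sum_filter]
  simpa only [mul_ite, mul_one, mul_zero, Finset.sum_ite_eq', Finset.mem_univ, if_true] using this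

end Marginal

theorem trajWeight_mul_importanceWeight {d0 : S → ℝ} {π π0 : S → A → ℝ}
    {Tker : S → A → S → ℝ} (hπ : ∀ s a, π0 s a = 0 → π s a = 0) {n : ℕ} (τ : Traj S A n) :
    trajWeight d0 π0 Tker τ * importanceWeight π π0 τ = trajWeight d0 π Tker τ := by
  have hratio :
      (∏ k, π0 (τ.1 k) (τ.2 k)) * importanceWeight π π0 τ = ∏ k, π (τ.1 k) (τ.2 k) := by
    rw [importanceWeight, ← Finset.prod_mul_distrib]
    exact Finset.prod_congr rfl fun k _ => mul_div_cancel_of_imp' (hπ _ _)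
  rw [trajWeight, trajWeight, ← hratio]
  ring

end Trajectories

/-- Rao-Blackwellization of importance weights / step-wise IS:
`E_{τ∼p_{π₀}}[w_{0:T}(τ) | τ_{0:t}] = w_{0:t}(τ)`, and consequently
`E_{τ∼p_{π₀}}[w_{0:T}(τ) r_t] = E_{τ∼p_{π₀}}[w_{0:t}(τ) r_t]` for any reward `r_t`
that is a function of the prefix `τ_{0:t}`. -/
theorem stmt_15 {S A : Type*} [Fintype S] [Fintype A] [DecidableEq S] [DecidableEq A]
    (Tker : S → A → S → ℝ)
    (hTstoch : ∀ s a, ∑ s', Tker s a s' = 1)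
    (π π0 : S → A → ℝ)
    (hπ_nonneg : ∀ s a, 0 ≤ π s a) (hπ_stoch : ∀ s, ∑ a, π s a = 1)
    (hπ0_stoch : ∀ s, ∑ a, π0 s a = 1)
    (habs : ∀ s a, 0 < π s a → 0 < π0 s a)
    (d0 : S → ℝ)
    (t T : ℕ) (htT : t ≤ T)
    (pπ0 : (Fin (T + 1) → S) × (Fin (T + 1) → A) → ℝ)
    (hpπ0 : ∀ τ, pπ0 τ = d0 (τ.1 0) * (∏ k : Fin (T + 1), π0 (τ.1 k) (τ.2 k)) *
      ∏ k : Fin T, Tker (τ.1 k.castSucc) (τ.2 k.castSucc) (τ.1 k.succ))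
    (w0T : (Fin (T + 1) → S) × (Fin (T + 1) → A) → ℝ)
    (hw0T : ∀ τ, w0T τ = ∏ k : Fin (T + 1), π (τ.1 k) (τ.2 k) / π0 (τ.1 k) (τ.2 k))
    (w0t : (Fin (T + 1) → S) × (Fin (T + 1) → A) → ℝ)
    (hw0t : ∀ τ, w0t τ = ∏ k : Fin (t + 1),
      π (τ.1 (Fin.castLE (by omega) k)) (τ.2 (Fin.castLE (by omega) k)) /
        π0 (τ.1 (Fin.castLE (by omega) k)) (τ.2 (Fin.castLE (by omega) k)))
    (pre : (Fin (T + 1) → S) × (Fin (T + 1) → A) →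
      (Fin (t + 1) → S) × (Fin (t + 1) → A))
    (hpre : ∀ τ, pre τ = (fun k => τ.1 (Fin.castLE (by omega) k),
                          fun k => τ.2 (Fin.castLE (by omega) k))) :
    -- conditional expectation of `w_{0:T}` given the prefix `τ_{0:t}` equals `w_{0:t}`:
    (∀ σ : (Fin (t + 1) → S) × (Fin (t + 1) → A),
      ∑ τ ∈ Finset.univ.filter (fun τ => pre τ = σ), pπ0 τ * w0T τ
        = (∏ k : Fin (t + 1), π (σ.1 k) (σ.2 k) / π0 (σ.1 k) (σ.2 k)) *
            ∑ τ ∈ Finset.univ.filter (fun τ => pre τ = σ), pπ0 τ) ∧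
    -- consequence: step-wise IS is unbiased for any reward depending on the prefix:
    (∀ r : (Fin (t + 1) → S) × (Fin (t + 1) → A) → ℝ,
      ∑ τ : (Fin (T + 1) → S) × (Fin (T + 1) → A), pπ0 τ * w0T τ * r (pre τ)
        = ∑ τ : (Fin (T + 1) → S) × (Fin (T + 1) → A), pπ0 τ * w0t τ * r (pre τ)) := by
  obtain rfl : pπ0 = trajWeight d0 π0 Tker := funext hpπ0
  obtain rfl : w0T = importanceWeight π π0 := funext hw0T
  obtain rfl : pre = trajPrefix htT := funext hpre
  obtain rfl : w0t = importanceWeight π π0 ∘ trajPrefix htT := funext hw0t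
  have hπ_zero (s : S) (a : A) (h : π0 s a = 0) : π s a = 0 :=
    le_antisymm (not_lt.mp fun hpos => (habs s a hpos).ne' h) (hπ_nonneg s a)
  have hreweight {n : ℕ} (τ : Traj S A n) :=
    trajWeight_mul_importanceWeight (d0 := d0) (Tker := Tker) hπ_zero τ
  constructor
  · intro σ
    rw [Finset.sum_congr rfl fun τ _ => hreweight τ,
      sum_filter_trajPrefix_eq_trajWeight hTstoch hπ_stoch,
      sum_filter_trajPrefix_eq_trajWeight hTstoch hπ0_stoch, ← hreweight σ, mul_comm]
    rfl
  · intro r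
    calc _ = ∑ τ : Traj S A T, trajWeight d0 π Tker τ * r (trajPrefix htT τ) := by
          simp only [hreweight]
      _ = ∑ σ : Traj S A t, trajWeight d0 π0 Tker σ * (importanceWeight π π0 σ * r σ) := by
          rw [sum_trajWeight_mul_comp_trajPrefix hTstoch hπ_stoch]
          simp only [← mul_assoc, hreweight]
      _ = _ := by
          rw [← sum_trajWeight_mul_comp_trajPrefix hTstoch hπ0_stoch htT]
          simp only [Function.comp_apply, mul_assoc]
end

section
/- (RKHS mini-max closed form) Let H be an RKHS on a finite set S with positive-definite kernel k, F = {f ∈ H : ‖f‖_H ≤ 1}, and let μ be a probability distribution over triples (s,a,s'). Define L(w,f) = E_{(s,a,s')∼μ}[Δ(w;s,a,s')·f(s')] where Δ(w;s,a,s') = w(s)β(a|s) − w(s'). Then max_{f∈F} L(w,f)² = E[Δ(w;s,a,s')·Δ(w;s̄,ā,s̄')·k(s',s̄')] where (s,a,s') and (s̄,ā,s̄') are independent draws from μ. -/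
/-!
The functional `f ↦ L f` is `f ↦ φ ⬝ᵥ f` for the pushed-forward weights
`φ = ∑ₚ μ p · Del p · e_{p.2.2}`, and the right-hand side is `φ ⬝ᵥ K φ`. In the RKHS inner product
`⟪u, v⟫ = u ⬝ᵥ K⁻¹ v` the functional is represented by `Kφ`, so Cauchy–Schwarz gives
`(φ ⬝ᵥ f)² ≤ (φ ⬝ᵥ K φ) ‖f‖²`, with equality at `f = Kφ / ‖Kφ‖`.
-/

namespace Matrix

variable {n ι R : Type*} [Fintype n] [DecidableEq n]

lemma IsSymm.dotProduct_mulVec_comm [CommSemiring R] {M : Matrix n n R} (hM : M.IsSymm)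
    (x y : n → R) : x ⬝ᵥ M *ᵥ y = y ⬝ᵥ M *ᵥ x := by
  simpa only [toBilin'_apply'] using (isSymm_toBilin'_iff_isSymm.mpr hM).eq x y

lemma inv_mulVec_mulVec [CommRing R] {A : Matrix n n R} (hA : IsUnit A) (v : n → R) :
    A⁻¹ *ᵥ A *ᵥ v = v := by
  rw [mulVec_mulVec, nonsing_inv_mul _ ((isUnit_iff_isUnit_det A).mp hA), one_mulVec]

lemma PosSemidef.sq_dotProduct_mulVec_le [CommRing R] [LinearOrder R] [IsStrictOrderedRing R]
    [StarRing R] [TrivialStar R] {M : Matrix n n R} (hM : M.PosSemidef) (x y : n → R) :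
    (x ⬝ᵥ M *ᵥ y) ^ 2 ≤ (x ⬝ᵥ M *ᵥ x) * (y ⬝ᵥ M *ᵥ y) := by
  simpa only [toBilin'_apply'] using
    (toBilin' M).apply_sq_le_of_symm
      (fun x => by simpa only [toBilin'_apply', star_trivial] using hM.dotProduct_mulVec_nonneg x)
      (LinearMap.BilinForm.isSymm_iff.mp
        (isSymm_toBilin'_iff_isSymm.mpr (isHermitian_iff_isSymm.mp hM.isHermitian))) x y

lemma PosDef.sq_dotProduct_le [Field R] [LinearOrder R] [IsStrictOrderedRing R] [StarRing R]
    [TrivialStar R] {K : Matrix n n R} (hK : K.PosDef) (φ f : n → R) :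
    (φ ⬝ᵥ f) ^ 2 ≤ (φ ⬝ᵥ K *ᵥ φ) * (f ⬝ᵥ K⁻¹ *ᵥ f) := by
  have h := hK.inv.posSemidef.sq_dotProduct_mulVec_le (K *ᵥ φ) f
  rwa [(isHermitian_iff_isSymm.mp hK.inv.isHermitian).dotProduct_mulVec_comm (K *ᵥ φ) f,
    inv_mulVec_mulVec hK.isUnit, dotProduct_comm f, dotProduct_comm (K *ᵥ φ)] at h

theorem PosDef.isGreatest_sq_dotProduct {K : Matrix n n ℝ} (hK : K.PosDef) (φ : n → ℝ) :
    IsGreatest {y | ∃ f : n → ℝ, f ⬝ᵥ K⁻¹ *ᵥ f ≤ 1 ∧ y = (φ ⬝ᵥ f) ^ 2} (φ ⬝ᵥ K *ᵥ φ) := by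
  set c := φ ⬝ᵥ K *ᵥ φ
  have hc : 0 ≤ c := by simpa using hK.posSemidef.dotProduct_mulVec_nonneg φ
  refine ⟨?_, ?_⟩
  · rcases hc.eq_or_lt with hc0 | hc0
    · exact ⟨0, by simp, by simp [← hc0]⟩
    have hsqrt : √c ^ 2 = c := Real.sq_sqrt hc
    refine ⟨(√c)⁻¹ • K *ᵥ φ, le_of_eq ?_, ?_⟩
    · simp only [mulVec_smul, dotProduct_smul, inv_mulVec_mulVec hK.isUnit, smul_eq_mul,
        dotProduct_comm _ φ]
      field_simp
      exact hsqrt.symm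
    · simp only [dotProduct_smul, smul_eq_mul]
      field_simp
      rw [hsqrt, sq]
  · rintro y ⟨f, hf, rfl⟩
    calc (φ ⬝ᵥ f) ^ 2 ≤ c * (f ⬝ᵥ K⁻¹ *ᵥ f) := hK.sq_dotProduct_le φ f
      _ ≤ c * 1 := by gcongr
      _ = c := mul_one c

variable [Fintype ι] [CommSemiring R]

lemma sum_mul_apply_eq_dotProduct (c : ι → R) (g : ι → n) (f : n → R) :
    ∑ i, c i * f (g i) = (∑ i, Pi.single (g i) (c i)) ⬝ᵥ f := by
  simp only [sum_dotProduct, single_dotProduct]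

lemma sum_sum_mul_apply_eq_dotProduct_mulVec (c : ι → R) (g : ι → n) (M : Matrix n n R) :
    ∑ i, ∑ j, c i * c j * M (g i) (g j) =
      (∑ i, Pi.single (g i) (c i)) ⬝ᵥ M *ᵥ ∑ j, Pi.single (g j) (c j) := by
  rw [← sum_mul_apply_eq_dotProduct]
  refine Finset.sum_congr rfl fun i _ => ?_
  rw [mulVec, dotProduct_comm, ← sum_mul_apply_eq_dotProduct, Finset.mul_sum]
  exact Finset.sum_congr rfl fun j _ => by ring

end Matrix

open Matrix in
theorem stmt_17_general {S A : Type*} [Fintype S] [Fintype A] [DecidableEq S]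
    (K : Matrix S S ℝ) (hK : K.PosDef)
    (μ : S × A × S → ℝ)
    (Del : S × A × S → ℝ)
    (L : (S → ℝ) → ℝ)
    (hL : ∀ f, L f = ∑ p, μ p * (Del p * f p.2.2)) :
    IsGreatest {y : ℝ | ∃ f : S → ℝ, dotProduct f (Matrix.mulVec K⁻¹ f) ≤ 1 ∧ y = (L f) ^ 2}
      (∑ p, ∑ q, μ p * μ q * (Del p * Del q * K p.2.2 q.2.2)) := by
  set c : S × A × S → ℝ := fun p => μ p * Del p
  have hL' : ∀ f, L f = (∑ p, Pi.single p.2.2 (c p)) ⬝ᵥ f := fun f => by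
    rw [hL, ← sum_mul_apply_eq_dotProduct]
    exact Finset.sum_congr rfl fun p _ => by ring
  have htarget : ∑ p, ∑ q, μ p * μ q * (Del p * Del q * K p.2.2 q.2.2) =
      ∑ p, ∑ q, c p * c q * K p.2.2 q.2.2 :=
    Finset.sum_congr rfl fun p _ => Finset.sum_congr rfl fun q _ => by ring
  simp only [hL', htarget, sum_sum_mul_apply_eq_dotProduct_mulVec]
  exact hK.isGreatest_sq_dotProduct _

/-- RKHS mini-max closed form: On a finite set `S` with positive-definite
kernel `K`, the RKHS norm of `f : S → ℝ` is `‖f‖²_H = fᵀ K⁻¹ f`, and `F` is the unit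
ball. For `L(w,f) = E_{(s,a,s')∼μ}[Del(w;s,a,s') f(s')]` with
`Del(w;s,a,s') = w(s)β(a|s) − w(s')`, the maximum of `L(w,f)²` over `F` equals
`E[Del(w;s,a,s')Del(w;s̄,ā,s̄') k(s',s̄')]` over independent draws. -/
theorem stmt_17 {S A : Type*} [Fintype S] [Fintype A] [DecidableEq S]
    (K : Matrix S S ℝ) (hK : K.PosDef)
    (μ : S × A × S → ℝ)
    (hμ_nonneg : ∀ p, 0 ≤ μ p) (hμ_sum : ∑ p, μ p = 1)
    (β : A → S → ℝ) (w : S → ℝ)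
    (Del : S × A × S → ℝ)
    (hDel : ∀ p, Del p = w p.1 * β p.2.1 p.1 - w p.2.2)
    (L : (S → ℝ) → ℝ)
    (hL : ∀ f, L f = ∑ p, μ p * (Del p * f p.2.2)) :
    IsGreatest {y : ℝ | ∃ f : S → ℝ, dotProduct f (Matrix.mulVec K⁻¹ f) ≤ 1 ∧ y = (L f) ^ 2}
      (∑ p, ∑ q, μ p * μ q * (Del p * Del q * K p.2.2 q.2.2)) :=
  stmt_17_general K hK μ Del L hL
end
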